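/- The matrix-valued map P1 of the three-degrees-of-freedom Hénon–Heiles type system defines a Poisson bracket: the bracket {f,g}_{P1}(x) = ∇f(x)ᵀ P1(x) ∇g(x) is bilinear, skew-symmetric, and satisfies the Jacobi identity {f,{g,h}_{P1}}_{P1} + {g,{h,f}_{P1}}_{P1} + {h,{f,g}_{P1}}_{P1} = 0 for all smooth functions f,g,h on ℝ⁶. -/

import Mathlib

/- STATEMENT 1: The matrix-valued map P1 of the 3-dof Hénon–Heiles type system
defines a Poisson bracket: bilinear, skew-symmetric, and Jacobi. -/

noncomputable section

open Matrix

/-- partial derivative of `f` at `x` in the `i`-th coordinate direction,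
coordinates ordered as `(q1,q2,q3,p1,p2,p3)`. -/
def pd (i : Fin 6) (f : (Fin 6 → ℝ) → ℝ) (x : Fin 6 → ℝ) : ℝ :=
  fderiv ℝ f x (Pi.single i 1)

/-- gradient (∂f/∂q1,∂f/∂q2,∂f/∂q3,∂f/∂p1,∂f/∂p2,∂f/∂p3). -/
def grad (f : (Fin 6 → ℝ) → ℝ) (x : Fin 6 → ℝ) : Fin 6 → ℝ :=
  fun i => pd i f x

/-- The matrix `P1 = [[0, A],[−Aᵀ, B]]` with
`A = −[[q1,−1,0],[2q2,q1,q3],[q3,0,0]]`, `B = [[0,−p2,−p3],[p2,0,0],[p3,0,0]]`. -/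
def P1 (x : Fin 6 → ℝ) : Matrix (Fin 6) (Fin 6) ℝ :=
  !![0, 0, 0, -(x 0), 1, 0;
     0, 0, 0, -(2 * x 1), -(x 0), -(x 2);
     0, 0, 0, -(x 2), 0, 0;
     x 0, 2 * x 1, x 2, 0, -(x 4), -(x 5);
     -1, x 0, 0, x 4, 0, 0;
     0, x 2, 0, x 5, 0, 0]

/-- the bracket `{f,g}_{P1}(x) = ∇f(x)ᵀ P1(x) ∇g(x)`. -/
def pb1 (f g : (Fin 6 → ℝ) → ℝ) (x : Fin 6 → ℝ) : ℝ :=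
  grad f x ⬝ᵥ (P1 x).mulVec (grad g x)

namespace HH3

variable {α : Type*}

lemma cv6_0 (a : α) (u : Fin 5 → α) : vecCons a u (0 : Fin 6) = a := rfl
lemma cv6_1 (a : α) (u : Fin 5 → α) : vecCons a u (1 : Fin 6) = u 0 := rfl
lemma cv6_2 (a : α) (u : Fin 5 → α) : vecCons a u (2 : Fin 6) = u 1 := rfl
lemma cv6_3 (a : α) (u : Fin 5 → α) : vecCons a u (3 : Fin 6) = u 2 := rfl
lemma cv6_4 (a : α) (u : Fin 5 → α) : vecCons a u (4 : Fin 6) = u 3 := rfl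
lemma cv6_5 (a : α) (u : Fin 5 → α) : vecCons a u (5 : Fin 6) = u 4 := rfl
lemma cv5_0 (a : α) (u : Fin 4 → α) : vecCons a u (0 : Fin 5) = a := rfl
lemma cv5_1 (a : α) (u : Fin 4 → α) : vecCons a u (1 : Fin 5) = u 0 := rfl
lemma cv5_2 (a : α) (u : Fin 4 → α) : vecCons a u (2 : Fin 5) = u 1 := rfl
lemma cv5_3 (a : α) (u : Fin 4 → α) : vecCons a u (3 : Fin 5) = u 2 := rfl
lemma cv5_4 (a : α) (u : Fin 4 → α) : vecCons a u (4 : Fin 5) = u 3 := rfl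
lemma cv4_0 (a : α) (u : Fin 3 → α) : vecCons a u (0 : Fin 4) = a := rfl
lemma cv4_1 (a : α) (u : Fin 3 → α) : vecCons a u (1 : Fin 4) = u 0 := rfl
lemma cv4_2 (a : α) (u : Fin 3 → α) : vecCons a u (2 : Fin 4) = u 1 := rfl
lemma cv4_3 (a : α) (u : Fin 3 → α) : vecCons a u (3 : Fin 4) = u 2 := rfl
lemma cv3_0 (a : α) (u : Fin 2 → α) : vecCons a u (0 : Fin 3) = a := rfl
lemma cv3_1 (a : α) (u : Fin 2 → α) : vecCons a u (1 : Fin 3) = u 0 := rfl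
lemma cv3_2 (a : α) (u : Fin 2 → α) : vecCons a u (2 : Fin 3) = u 1 := rfl
lemma cv2_0 (a : α) (u : Fin 1 → α) : vecCons a u (0 : Fin 2) = a := rfl
lemma cv2_1 (a : α) (u : Fin 1 → α) : vecCons a u (1 : Fin 2) = u 0 := rfl
lemma cv1_0 (a : α) (u : Fin 0 → α) : vecCons a u (0 : Fin 1) = a := rfl

lemma fm0 (h : 0 < 6) : (⟨0, h⟩ : Fin 6) = 0 := rfl
lemma fm1 (h : 1 < 6) : (⟨1, h⟩ : Fin 6) = 1 := rfl
lemma fm2 (h : 2 < 6) : (⟨2, h⟩ : Fin 6) = 2 := rfl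
lemma fm3 (h : 3 < 6) : (⟨3, h⟩ : Fin 6) = 3 := rfl
lemma fm4 (h : 4 < 6) : (⟨4, h⟩ : Fin 6) = 4 := rfl
lemma fm5 (h : 5 < 6) : (⟨5, h⟩ : Fin 6) = 5 := rfl

def dP (l j k : Fin 6) : ℝ := P1 (Pi.single l 1) j k - P1 (fun _ => 0) j k

set_option maxHeartbeats 2000000 in
lemma P1_affine (j k : Fin 6) (y : Fin 6 → ℝ) :
    P1 y j k = P1 (fun _ => 0) j k + ∑ l, dP l j k * y l := by
  fin_cases j <;> fin_cases k <;>
    simp only [fm0, fm1, fm2, fm3, fm4, fm5, P1, dP, Fin.sum_univ_six, Matrix.of_apply,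
      cv6_0, cv6_1, cv6_2, cv6_3, cv6_4, cv6_5, cv5_0, cv5_1, cv5_2, cv5_3, cv5_4,
      cv4_0, cv4_1, cv4_2, cv4_3, cv3_0, cv3_1, cv3_2, cv2_0, cv2_1, cv1_0] <;>
    simp (config := { decide := true }) [Pi.single_apply]

lemma hasFDerivAt_P1entry (j k : Fin 6) (x : Fin 6 → ℝ) :
    HasFDerivAt (fun y => P1 y j k)
      (∑ l, dP l j k • (ContinuousLinearMap.proj l : (Fin 6 → ℝ) →L[ℝ] ℝ)) x := by
  have hrw : (fun y => P1 y j k) =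
      fun y : Fin 6 → ℝ => P1 (fun _ => 0) j k +
        (∑ l, dP l j k • (ContinuousLinearMap.proj l : (Fin 6 → ℝ) →L[ℝ] ℝ)) y := by
    funext y
    rw [P1_affine j k y]
    simp [ContinuousLinearMap.sum_apply]
  rw [hrw]
  simpa using (hasFDerivAt_const (P1 (fun _ => 0) j k) x).fun_add
    (∑ l, dP l j k • (ContinuousLinearMap.proj l : (Fin 6 → ℝ) →L[ℝ] ℝ)).hasFDerivAt

lemma diffAt_P1entry (j k : Fin 6) (x : Fin 6 → ℝ) :
    DifferentiableAt ℝ (fun y => P1 y j k) x :=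
  (hasFDerivAt_P1entry j k x).differentiableAt

lemma pd_P1entry (i j k : Fin 6) (x : Fin 6 → ℝ) :
    pd i (fun y => P1 y j k) x = dP i j k := by
  rw [pd, (hasFDerivAt_P1entry j k x).fderiv]
  simp [ContinuousLinearMap.sum_apply, Pi.single_apply, mul_ite,
    Finset.sum_ite_eq' Finset.univ i (fun l => dP l j k)]

lemma contDiff_pd {f : (Fin 6 → ℝ) → ℝ} (hf : ContDiff ℝ (⊤ : ℕ∞) f) (j : Fin 6) :
    ContDiff ℝ (⊤ : ℕ∞) (pd j f) :=
  (hf.fderiv_right (by simp)).clm_apply contDiff_const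

lemma diffAt_pd {f : (Fin 6 → ℝ) → ℝ} (hf : ContDiff ℝ (⊤ : ℕ∞) f) (j : Fin 6) (x : Fin 6 → ℝ) :
    DifferentiableAt ℝ (pd j f) x :=
  ((contDiff_pd hf j).differentiable (by simp)).differentiableAt

lemma pd_mul {f g : (Fin 6 → ℝ) → ℝ} {x : Fin 6 → ℝ} (i : Fin 6)
    (hf : DifferentiableAt ℝ f x) (hg : DifferentiableAt ℝ g x) :
    pd i (fun y => f y * g y) x = pd i f x * g x + f x * pd i g x := by
  simp [pd, fderiv_fun_mul hf hg]; ring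

lemma pd_sum {u : Fin 6 → (Fin 6 → ℝ) → ℝ} {x : Fin 6 → ℝ} (i : Fin 6)
    (hu : ∀ j, DifferentiableAt ℝ (u j) x) :
    pd i (fun y => ∑ j, u j y) x = ∑ j, pd i (u j) x := by
  rw [pd, fderiv_fun_sum (fun j _ => hu j)]
  simp [ContinuousLinearMap.sum_apply, pd]

def pdd (i j : Fin 6) (f : (Fin 6 → ℝ) → ℝ) (x : Fin 6 → ℝ) : ℝ := pd i (pd j f) x

lemma pd_pd {f : (Fin 6 → ℝ) → ℝ} (hf : ContDiff ℝ (⊤ : ℕ∞) f) (i j : Fin 6) (x : Fin 6 → ℝ) :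
    pdd i j f x = fderiv ℝ (fderiv ℝ f) x (Pi.single i 1) (Pi.single j 1) := by
  have hdf : DifferentiableAt ℝ (fderiv ℝ f) x :=
    (((hf.fderiv_right (m := 1) (by exact WithTop.coe_le_coe.mpr le_top)).differentiable one_ne_zero) x)
  have : (pd j f) = fun y => (fderiv ℝ f y) ((fun _ : Fin 6 → ℝ => (Pi.single j 1 : Fin 6 → ℝ)) y) := rfl
  rw [pdd, pd, this, fderiv_clm_apply hdf (differentiableAt_const _)]
  simp

lemma pdd_comm {f : (Fin 6 → ℝ) → ℝ} (hf : ContDiff ℝ (⊤ : ℕ∞) f) (i j : Fin 6) (x : Fin 6 → ℝ) :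
    pdd i j f x = pdd j i f x := by
  rw [pd_pd hf, pd_pd hf]
  exact second_derivative_symmetric
    (fun y => ((hf.differentiable (by simp)) y).hasFDerivAt)
    ((((hf.fderiv_right (m := 1) (by exact WithTop.coe_le_coe.mpr le_top)).differentiable one_ne_zero) x).hasFDerivAt) _ _

lemma pb1_sum (f g : (Fin 6 → ℝ) → ℝ) (x : Fin 6 → ℝ) :
    pb1 f g x = ∑ j, ∑ k, pd j f x * (P1 x j k * pd k g x) := by
  simp [pb1, grad, dotProduct, Matrix.mulVec, Finset.mul_sum]

lemma pd_pb1 {g h : (Fin 6 → ℝ) → ℝ} (hg : ContDiff ℝ (⊤ : ℕ∞) g) (hh : ContDiff ℝ (⊤ : ℕ∞) h)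
    (l : Fin 6) (x : Fin 6 → ℝ) :
    pd l (pb1 g h) x = ∑ j, ∑ k,
      (pdd l j g x * (P1 x j k * pd k h x) +
        pd j g x * (dP l j k * pd k h x + P1 x j k * pdd l k h x)) := by
  have hterm : ∀ (j k : Fin 6) (y : Fin 6 → ℝ),
      DifferentiableAt ℝ (fun y => pd j g y * (P1 y j k * pd k h y)) y := fun j k y =>
    (diffAt_pd hg j y).mul ((diffAt_P1entry j k y).mul (diffAt_pd hh k y))
  have hrw : pb1 g h = fun y => ∑ j, ∑ k, pd j g y * (P1 y j k * pd k h y) :=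
    funext fun y => pb1_sum g h y
  rw [hrw, pd_sum l (fun j => DifferentiableAt.fun_sum fun k _ => hterm j k x)]
  refine Finset.sum_congr rfl fun j _ => ?_
  rw [pd_sum l (fun k => hterm j k x)]
  refine Finset.sum_congr rfl fun k _ => ?_
  rw [pd_mul l (diffAt_pd hg j x) ((diffAt_P1entry j k x).fun_mul (diffAt_pd hh k x)),
    pd_mul l (diffAt_P1entry j k x) (diffAt_pd hh k x), pd_P1entry]
  rfl


lemma pd_combo {f g : (Fin 6 → ℝ) → ℝ} {x : Fin 6 → ℝ} (i : Fin 6)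
    (hf : DifferentiableAt ℝ f x) (hg : DifferentiableAt ℝ g x) (a b : ℝ) :
    pd i (fun y => a * f y + b * g y) x = a * pd i f x + b * pd i g x := by
  rw [pd, fderiv_fun_add (hf.const_mul a) (hg.const_mul b), fderiv_const_mul hf,
    fderiv_const_mul hg]
  simp [pd]

end HH3

open HH3 in
set_option maxHeartbeats 8000000 in
theorem henon_heiles_3dof_P1_poisson :
    -- bilinearity
    (∀ f g h : (Fin 6 → ℝ) → ℝ, ContDiff ℝ (⊤ : ℕ∞) f → ContDiff ℝ (⊤ : ℕ∞) g → ContDiff ℝ (⊤ : ℕ∞) h →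
      ∀ (a b : ℝ) (x : Fin 6 → ℝ),
        pb1 (fun y => a * f y + b * g y) h x = a * pb1 f h x + b * pb1 g h x ∧
        pb1 h (fun y => a * f y + b * g y) x = a * pb1 h f x + b * pb1 h g x) ∧
    -- skew-symmetry
    (∀ f g : (Fin 6 → ℝ) → ℝ, ∀ x : Fin 6 → ℝ, pb1 f g x = - pb1 g f x) ∧
    -- Jacobi identity
    (∀ f g h : (Fin 6 → ℝ) → ℝ, ContDiff ℝ (⊤ : ℕ∞) f → ContDiff ℝ (⊤ : ℕ∞) g → ContDiff ℝ (⊤ : ℕ∞) h →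
      ∀ x : Fin 6 → ℝ,
        pb1 f (pb1 g h) x + pb1 g (pb1 h f) x + pb1 h (pb1 f g) x = 0) := by
  refine ⟨?_, ?_, ?_⟩
  · intro f g h hf hg hh a b x
    constructor <;>
    · simp only [pb1_sum,
        pd_combo _ ((hf.differentiable (by simp)) x) ((hg.differentiable (by simp)) x) a b,
        Fin.sum_univ_six]
      ring
  · intro f g x
    simp only [pb1_sum, Fin.sum_univ_six, P1, Matrix.of_apply, cv6_0, cv6_1, cv6_2, cv6_3, cv6_4, cv6_5, cv5_0, cv5_1, cv5_2, cv5_3, cv5_4, cv4_0, cv4_1, cv4_2, cv4_3, cv3_0, cv3_1, cv3_2, cv2_0, cv2_1, cv1_0]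
    ring
  · intro f g h hf hg hh x
    simp only [pb1_sum]
    simp only [pd_pb1 hg hh, pd_pb1 hh hf, pd_pb1 hf hg]
    simp only [Fin.sum_univ_six]
    simp only [P1, dP, Matrix.of_apply, cv6_0, cv6_1, cv6_2, cv6_3, cv6_4, cv6_5, cv5_0, cv5_1, cv5_2, cv5_3, cv5_4, cv4_0, cv4_1, cv4_2, cv4_3, cv3_0, cv3_1, cv3_2, cv2_0, cv2_1, cv1_0]
    simp (config := { decide := true }) [Pi.single_apply]
    simp only [pdd_comm hf 1 0 x, pdd_comm hf 2 0 x, pdd_comm hf 2 1 x, pdd_comm hf 3 0 x, pdd_comm hf 3 1 x, pdd_comm hf 3 2 x, pdd_comm hf 4 0 x, pdd_comm hf 4 1 x, pdd_comm hf 4 2 x, pdd_comm hf 4 3 x, pdd_comm hf 5 0 x, pdd_comm hf 5 1 x, pdd_comm hf 5 2 x, pdd_comm hf 5 3 x, pdd_comm hf 5 4 x, pdd_comm hg 1 0 x, pdd_comm hg 2 0 x, pdd_comm hg 2 1 x, pdd_comm hg 3 0 x, pdd_comm hg 3 1 x, pdd_comm hg 3 2 x, pdd_comm hg 4 0 x,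 pdd_comm hg 4 1 x, pdd_comm hg 4 2 x, pdd_comm hg 4 3 x, pdd_comm hg 5 0 x, pdd_comm hg 5 1 x, pdd_comm hg 5 2 x, pdd_comm hg 5 3 x, pdd_comm hg 5 4 x, pdd_comm hh 1 0 x, pdd_comm hh 2 0 x, pdd_comm hh 2 1 x, pdd_comm hh 3 0 x, pdd_comm hh 3 1 x, pdd_comm hh 3 2 x, pdd_comm hh 4 0 x, pdd_comm hh 4 1 x, pdd_comm hh 4 2 x, pdd_comm hh 4 3 x, pdd_comm hh 5 0 x, pdd_comm hh 5 1 x, pdd_comm hh 5 2 x, pdd_comm hh 5 3 x, pdd_comm hh 5 4 x]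
    ring


end
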